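/- For any pair of C² functions u, v on an open set of ℝ², the following pointwise identity holds: Δu·(∇v·x) + Δv·(∇u·x) = div( ∇u·(∇v·x) + ∇v·(∇u·x) − (∇u·∇v)·x ), where x denotes the position vector. -/

import Mathlib

/-!
The divergence of a vector field is the trace of its derivative. Write `W = (∇v·x) ∇u +
(∇u·x) ∇v - (∇u·∇v) x` and differentiate by the product rule. Taking the trace, the terms in
which a Hessian acts as an operator give `Δu (∇v·x) + Δv (∇u·x)`; the mixed terms
`D²v(∇u, x)` and `D²u(∇v, x)` appear once with each sign and cancel because Hessians are
symmetric; the rank-one terms `∇u ⊗ ∇v` contribute `2 ∇u·∇v`, and the term `(∇u·∇v) id`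
contributes `-n ∇u·∇v` in dimension `n`. The remainder `(2 - n) ∇u·∇v` vanishes for `n = 2`.
-/

open scoped RealInnerProductSpace

noncomputable section

abbrev E2 : Type := EuclideanSpace ℝ (Fin 2)

/-- The Laplacian on `ℝ²`, computed via second directional derivatives in the
coordinate directions. -/
def lap (u : E2 → ℝ) (x : E2) : ℝ :=
  fderiv ℝ (fun y => fderiv ℝ u y (EuclideanSpace.single 0 1)) x (EuclideanSpace.single 0 1) +
  fderiv ℝ (fun y => fderiv ℝ u y (EuclideanSpace.single 1 1)) x (EuclideanSpace.single 1 1)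

/-- The divergence of a vector field on `ℝ²`. -/
def div2 (W : E2 → E2) (x : E2) : ℝ :=
  ⟪fderiv ℝ W x (EuclideanSpace.single 0 1), EuclideanSpace.single 0 1⟫ +
  ⟪fderiv ℝ W x (EuclideanSpace.single 1 1), EuclideanSpace.single 1 1⟫

open InnerProductSpace

theorem ContinuousLinearMap.trace_smulRight {R M : Type*} [CommRing R] [TopologicalSpace R]
    [TopologicalSpace M] [AddCommGroup M] [Module R M] [ContinuousSMul R M]
    [Module.Free R M] [Module.Finite R M] (f : M →L[R] R) (v : M) :
    LinearMap.trace R M (f.smulRight v : M →L[R] M) = f v :=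
  LinearMap.trace_smulRight (f : M →ₗ[R] R) v

section RealInnerProductSpace

variable {E : Type*} [NormedAddCommGroup E] [InnerProductSpace ℝ E]

/-- The polarized Rellich–Pohozaev field; for `a = c = ∇u` it is `2 (∇u·y) ∇u - |∇u|² y`. -/
def rellichField (a c : E → E) (y : E) : E :=
  ⟪c y, y⟫ • a y + ⟪a y, y⟫ • c y - ⟪a y, c y⟫ • y

theorem trace_fderiv_rellichField [FiniteDimensional ℝ E] {a c : E → E} {A C : E →L[ℝ] E}
    {x : E} (ha : HasFDerivAt a A x) (hc : HasFDerivAt c C x)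
    (hA : (A : E →ₗ[ℝ] E).IsSymmetric) (hC : (C : E →ₗ[ℝ] E).IsSymmetric) :
    LinearMap.trace ℝ E (fderiv ℝ (rellichField a c) x) =
      LinearMap.trace ℝ E A * ⟪c x, x⟫ + LinearMap.trace ℝ E C * ⟪a x, x⟫
        + (2 - Module.finrank ℝ E) * ⟪a x, c x⟫ := by
  have hx := hasFDerivAt_id (𝕜 := ℝ) x
  have hW : HasFDerivAt (rellichField a c) _ x :=
    (((hc.inner ℝ hx).smul ha).add ((ha.inner ℝ hx).smul hc)).sub ((ha.inner ℝ hc).smul hx)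
  simp only [hW.fderiv, ContinuousLinearMap.toLinearMap_add, ContinuousLinearMap.toLinearMap_sub,
    ContinuousLinearMap.toLinearMap_smul, map_add, map_sub, map_smul,
    ContinuousLinearMap.trace_smulRight, ContinuousLinearMap.coe_id, LinearMap.trace_id,
    ContinuousLinearMap.comp_apply, ContinuousLinearMap.prod_apply, fderivInnerCLM_apply,
    ContinuousLinearMap.id_apply, id_eq, smul_eq_mul]
  -- the second-order cross terms cancel by symmetry of `A` and `C`
  have hCa : ⟪C (a x), x⟫ = ⟪a x, C x⟫ := hC (a x) x
  have hAc : ⟪A (c x), x⟫ = ⟪A x, c x⟫ := (hA (c x) x).trans (real_inner_comm _ _)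
  rw [hCa, hAc, real_inner_comm (c x)]
  ring

variable {f : E → ℝ} {x : E}

theorem ContDiffAt.differentiableAt_fderiv (hf : ContDiffAt ℝ 2 f x) :
    DifferentiableAt ℝ (fderiv ℝ f) x :=
  (hf.fderiv_right (m := 1) le_rfl).differentiableAt one_ne_zero

variable [CompleteSpace E]

-- Over `ℝ` the conjugate-linear Riesz map `(toDual ℝ E).symm` is linear by defeq.
theorem hasFDerivAt_gradient (hf : DifferentiableAt ℝ (fderiv ℝ f) x) :
    HasFDerivAt (gradient f)
      (((toDual ℝ E).symm.toContinuousLinearEquiv.toContinuousLinearMap :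
          StrongDual ℝ E →L[ℝ] E) ∘L fderiv ℝ (fderiv ℝ f) x) x :=
  ((toDual ℝ E).symm.toContinuousLinearEquiv.toContinuousLinearMap :
      StrongDual ℝ E →L[ℝ] E).hasFDerivAt.comp x hf.hasFDerivAt

theorem inner_fderiv_gradient_apply (hf : DifferentiableAt ℝ (fderiv ℝ f) x) (h k : E) :
    ⟪fderiv ℝ (gradient f) x h, k⟫ = fderiv ℝ (fderiv ℝ f) x h k := by
  rw [(hasFDerivAt_gradient hf).fderiv]
  exact toDual_symm_apply

theorem ContDiffAt.isSymmetric_fderiv_gradient (hf : ContDiffAt ℝ 2 f x) :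
    (fderiv ℝ (gradient f) x : E →ₗ[ℝ] E).IsSymmetric := by
  intro h k
  rw [ContinuousLinearMap.coe_coe, real_inner_comm _ h,
    inner_fderiv_gradient_apply hf.differentiableAt_fderiv,
    inner_fderiv_gradient_apply hf.differentiableAt_fderiv]
  exact hf.isSymmSndFDerivAt (by simp) h k

end RealInnerProductSpace

theorem div2_eq_trace_fderiv (W : E2 → E2) (x : E2) :
    div2 W x = LinearMap.trace ℝ E2 (fderiv ℝ W x) := by
  simp [LinearMap.trace_eq_sum_inner _ (EuclideanSpace.basisFun (Fin 2) ℝ), div2,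
    Fin.sum_univ_two, real_inner_comm]

theorem lap_eq_trace_fderiv_gradient {u : E2 → ℝ} {x : E2}
    (hu : DifferentiableAt ℝ (fderiv ℝ u) x) :
    lap u x = LinearMap.trace ℝ E2 (fderiv ℝ (gradient u) x) := by
  simp [LinearMap.trace_eq_sum_inner _ (EuclideanSpace.basisFun (Fin 2) ℝ), lap,
    Fin.sum_univ_two, real_inner_comm (fderiv ℝ (gradient u) x _),
    inner_fderiv_gradient_apply hu, fderiv_clm_apply hu (differentiableAt_const _)]

/-- for any pair of C² functions `u, v` on an open set of `ℝ²`,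
`Δu (∇v·x) + Δv (∇u·x) = div(∇u (∇v·x) + ∇v (∇u·x) − (∇u·∇v) x)`. -/
theorem divergence_identity (U : Set E2) (hU : IsOpen U) (u v : E2 → ℝ)
    (hu : ContDiffOn ℝ 2 u U) (hv : ContDiffOn ℝ 2 v U) :
    ∀ x ∈ U,
      lap u x * ⟪gradient v x, x⟫ + lap v x * ⟪gradient u x, x⟫ =
        div2 (fun y =>
          ⟪gradient v y, y⟫ • gradient u y + ⟪gradient u y, y⟫ • gradient v y
            - ⟪gradient u y, gradient v y⟫ • y) x := by
  intro x hx
  have hu₂ : ContDiffAt ℝ 2 u x := (hu x hx).contDiffAt (hU.mem_nhds hx)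
  have hv₂ : ContDiffAt ℝ 2 v x := (hv x hx).contDiffAt (hU.mem_nhds hx)
  have hDu := (hasFDerivAt_gradient hu₂.differentiableAt_fderiv).differentiableAt.hasFDerivAt
  have hDv := (hasFDerivAt_gradient hv₂.differentiableAt_fderiv).differentiableAt.hasFDerivAt
  have key := trace_fderiv_rellichField hDu hDv hu₂.isSymmetric_fderiv_gradient
    hv₂.isSymmetric_fderiv_gradient
  rw [finrank_euclideanSpace_fin, ← lap_eq_trace_fderiv_gradient hu₂.differentiableAt_fderiv,
    ← lap_eq_trace_fderiv_gradient hv₂.differentiableAt_fderiv] at key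
  rw [div2_eq_trace_fderiv]
  exact (key.trans (by ring)).symm
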